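/- arXiv:1210.5305 — 2 statements merged into one kernel-verified Lean document; each statement's English description precedes it below -/
import Mathlib

section
/- Let n be a positive integer and 1 ≤ k ≤ n. Let V be the n×n matrix whose (i,j) entry is x_i^{j-1} for 1 ≤ j < n, and whose (i,n) entry is -\frac{(x_i - c q^k)(a x_i; q)_{k-1}(a b q^k x_i; q)_{n-k}}{x_i (1 - a x_i)}. Then (-1)^{n-1} det V / \prod_{1≤i<j≤n}(x_j - x_i) = \frac{c q^k}{\prod_{l=1}^n x_l} + χ(k=1) · \frac{(-1)^n a^{n-1} (1 - a c q)(b q; q)_{n-1}}{\prod_{l=1}^n (1 - a x_l)}, assuming the x_i are distinct nonzero and 1 - a x_i ≠ 0 for all i. -/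
open Finset

/-- q-Pochhammer symbol `(x;q)_m = ∏_{i=0}^{m-1} (1 - x q^i)`. -/
noncomputable def qPoch (x q : ℂ) (m : ℕ) : ℂ := ∏ i ∈ Finset.range m, (1 - x * q ^ i)

open Polynomial Matrix

lemma aux_prod_pairs {n : ℕ} (f : Fin n → ℂ) :
    ∏ p ∈ Finset.univ.filter (fun p : Fin n × Fin n => p.1 < p.2), (f p.2 - f p.1)
      = ∏ i : Fin n, ∏ j ∈ Finset.Ioi i, (f j - f i) := by
  rw [Finset.prod_filter, Fintype.prod_prod_type]
  refine Finset.prod_congr rfl fun i _ => ?_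
  have : Finset.Ioi i = Finset.univ.filter (fun j => i < j) := by
    ext j; simp
  rw [this, Finset.prod_filter]

lemma qPoch_zero (q : ℂ) (r : ℕ) : qPoch 0 q r = 1 := by simp [qPoch]

lemma qPoch_one (q : ℂ) (r : ℕ) (hr : 1 ≤ r) : qPoch 1 q r = 0 := by
  apply Finset.prod_eq_zero (Finset.mem_range.mpr hr)
  simp

noncomputable def Bc (m k : ℕ) (a b c q : ℂ) : ℂ :=
  (if k = 1 then 1 else 0) * (-(1 - a*c*q)) * qPoch (b*q) q m

lemma eval_Hfac (a q t : ℂ) (r : ℕ) :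
    eval t (∏ i ∈ Finset.range r, (1 - C (a*q^i) * X)) = qPoch (a*t) q r := by
  rw [eval_prod]
  unfold qPoch
  refine Finset.prod_congr rfl fun i _ => ?_
  simp; ring

lemma natDegree_one_sub_C_mul_X_le (r : ℂ) : (1 - C r * X : ℂ[X]).natDegree ≤ 1 := by
  refine le_trans (natDegree_sub_le _ _) ?_
  simp only [natDegree_one, max_le_iff]
  exact ⟨Nat.zero_le _, le_trans (natDegree_C_mul_le _ _) natDegree_X_le⟩

lemma key_partial_fraction (m k : ℕ) (hk1 : 1 ≤ k) (hk2 : k ≤ m+1) (a b c q : ℂ) :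
    ∃ Q : ℂ[X], Q.coeff m = 0 ∧ Q.natDegree < m + 1 ∧
      ∀ t : ℂ, t ≠ 0 → 1 - a*t ≠ 0 →
        -((t - c*q^k) * qPoch (a*t) q (k-1) * qPoch (a*b*q^k*t) q (m+1-k)) / (t * (1-a*t))
          = Q.eval t + (c*q^k) * t⁻¹ + (Bc m k a b c q) * (1 - a*t)⁻¹ := by
  set B := Bc m k a b c q with hB
  set G : ℂ[X] := (∏ i ∈ Finset.range (k-1), (1 - C (a*q^i) * X))
    * (∏ i ∈ Finset.range (m+1-k), (1 - C ((a*b*q^k)*q^i) * X)) with hG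
  set H : ℂ[X] := -(X - C (c*q^k)) * G - C (c*q^k) * (1 - C a * X) - C B * X with hH
  have hH_eval : ∀ t : ℂ, H.eval t
      = -((t - c*q^k) * qPoch (a*t) q (k-1) * qPoch ((a*b*q^k)*t) q (m+1-k))
        - c*q^k*(1-a*t) - B*t := by
    intro t
    rw [hH, hG]
    simp only [eval_sub, eval_mul, eval_neg, eval_add, eval_one, eval_C, eval_X,
      eval_Hfac]
    ring
  have hdegH : H.natDegree ≤ m + 1 := by
    rw [hH]
    refine le_trans (natDegree_sub_le _ _) (max_le (le_trans (natDegree_sub_le _ _) (max_le ?_ ?_)) ?_)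
    · refine le_trans (natDegree_mul_le) ?_
      have hG1 : G.natDegree ≤ m := by
        rw [hG]
        refine le_trans (natDegree_mul_le) ?_
        have p1 : (∏ i ∈ Finset.range (k-1), (1 - C (a*q^i) * X)).natDegree ≤ k - 1 := by
          refine le_trans (natDegree_prod_le _ _) ?_
          refine le_trans (Finset.sum_le_card_nsmul _ _ 1 fun i _ => natDegree_one_sub_C_mul_X_le _) ?_
          simp
        have p2 : (∏ i ∈ Finset.range (m+1-k), (1 - C ((a*b*q^k)*q^i) * X)).natDegree ≤ m+1-k := by
          refine le_trans (natDegree_prod_le _ _) ?_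
          refine le_trans (Finset.sum_le_card_nsmul _ _ 1 fun i _ => natDegree_one_sub_C_mul_X_le _) ?_
          simp
        omega
      have hX : (-(X - C (c*q^k)) : ℂ[X]).natDegree ≤ 1 := by
        rw [natDegree_neg]; exact le_of_eq (natDegree_X_sub_C _)
      omega
    · refine le_trans natDegree_mul_le ?_
      have := natDegree_one_sub_C_mul_X_le a
      simp only [natDegree_C]
      omega
    · refine le_trans natDegree_mul_le ?_
      simp [natDegree_X_le]
  have hfact : ∃ Q : ℂ[X], X * (1 - C a * X) * Q = H ∧ Q.coeff m = 0 ∧ Q.natDegree < m + 1 := by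
    by_cases ha : a = 0
    · -- a = 0 case
      subst ha
      have hGone : G = 1 := by
        rw [hG]
        rw [Finset.prod_congr rfl (fun i _ => by norm_num : ∀ i ∈ Finset.range (k-1),
          (1 - C ((0:ℂ)*q^i) * X) = 1)]
        rw [Finset.prod_congr rfl (fun i _ => by norm_num : ∀ i ∈ Finset.range (m+1-k),
          (1 - C (((0:ℂ)*b*q^k)*q^i) * X) = 1)]
        simp
      refine ⟨C (-(1 + B)), ?_, ?_, by simp only [natDegree_C]; omega⟩
      · rw [hH, hGone]
        simp only [map_zero, zero_mul, sub_zero, mul_one, C_neg, C_add, C_1]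
        ring
      · rcases Nat.eq_zero_or_pos m with hm | hm
        · subst hm
          have hk : k = 1 := by omega
          subst hk
          have : B = -1 := by
            rw [hB, Bc]
            simp [qPoch]
          rw [this]
          simp
        · rw [coeff_C, if_neg (by omega)]
    · -- a ≠ 0 case
      have hroot : H.IsRoot a⁻¹ := by
        have h := hH_eval a⁻¹
        rcases Nat.eq_or_lt_of_le hk1 with hk | hk
        · -- k = 1
          have hk' : k = 1 := hk.symm
          subst hk'
          rw [IsRoot, h]
          simp only [Nat.sub_self, qPoch]
          rw [show a*b*q^1*a⁻¹ = b*q by field_simp]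
          rw [hB, Bc, if_pos rfl]
          show _ - _ - (1 * (-(1 - a*c*q)) * ∏ i ∈ Finset.range m, (1 - b*q * q ^ i)) * a⁻¹ = 0
          rw [show m + 1 - 1 = m from rfl]
          field_simp
          ring
        · -- k ≥ 2
          have h2 : 1 ≤ k - 1 := by omega
          rw [IsRoot, h]
          rw [show a * a⁻¹ = 1 from mul_inv_cancel₀ ha, qPoch_one _ _ h2]
          rw [hB, Bc, if_neg (by omega)]
          ring
      have hroot0 : H.IsRoot 0 := by
        rw [IsRoot, hH_eval 0]
        simp [qPoch_zero]
      set P1 := H /ₘ (X - C a⁻¹) with hP1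
      have h1 : (X - C a⁻¹) * P1 = H := mul_divByMonic_eq_iff_isRoot.mpr hroot
      have hP1root : P1.IsRoot 0 := by
        have := congrArg (eval 0) h1
        simp only [eval_mul, eval_sub, eval_X, eval_C] at this
        rw [hroot0] at this
        have h0 : (0 : ℂ) - a⁻¹ ≠ 0 := by simpa using inv_ne_zero ha
        exact (mul_eq_zero.mp this).resolve_left h0
      set P2 := P1 /ₘ (X - C 0) with hP2
      have h2 : (X - C 0) * P2 = P1 := mul_divByMonic_eq_iff_isRoot.mpr hP1root
      have h2' : X * P2 = P1 := by rw [← h2]; simp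
      have hCa : C a * C a⁻¹ = (1 : ℂ[X]) := by
        rw [← C_mul, mul_inv_cancel₀ ha, C_1]
      have hQH : X * (1 - C a * X) * ((-(C a⁻¹)) * P2) = H := by
        calc X * (1 - C a * X) * ((-(C a⁻¹)) * P2)
            = (X * (1 - C a * X) * (-(C a⁻¹))) * P2 := by ring
          _ = ((X - C a⁻¹) * X) * P2 := by
              congr 1
              linear_combination (X:ℂ[X])^2 * hCa
          _ = (X - C a⁻¹) * (X * P2) := by ring
          _ = H := by rw [h2', h1]
      by_cases hQ0 : (-(C a⁻¹)) * P2 = 0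
      · refine ⟨(-(C a⁻¹)) * P2, hQH, ?_, ?_⟩
        · rw [hQ0]; simp
        · rw [hQ0]; simp
      · have hsub : (1 - C a * X : ℂ[X]) = C (-a) * X + C 1 := by
          rw [C_neg, C_1]; ring
        have hd1 : (1 - C a * X : ℂ[X]).natDegree = 1 := by
          rw [hsub]; exact natDegree_linear (neg_ne_zero.mpr ha)
        have hne1 : (1 - C a * X : ℂ[X]) ≠ 0 := fun h => by simp [h] at hd1
        have hdeg2 : ((X:ℂ[X]) * (1 - C a * X)).natDegree = 2 := by
          rw [natDegree_mul X_ne_zero hne1, natDegree_X, hd1]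
        have h5 : 2 + ((-(C a⁻¹)) * P2).natDegree = H.natDegree := by
          rw [← hQH, natDegree_mul (mul_ne_zero X_ne_zero hne1) hQ0, hdeg2]
        have h6 : ((-(C a⁻¹)) * P2).natDegree < m := by omega
        exact ⟨(-(C a⁻¹)) * P2, hQH, coeff_eq_zero_of_natDegree_lt h6, by omega⟩
  obtain ⟨Q, hQH, hcm, hdm⟩ := hfact
  refine ⟨Q, hcm, hdm, fun t ht hat => ?_⟩
  have e := hH_eval t
  rw [← hQH] at e
  simp only [eval_mul, eval_sub, eval_one, eval_C, eval_X] at e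
  rw [div_eq_iff (mul_ne_zero ht hat)]
  have h1 : t * t⁻¹ = 1 := mul_inv_cancel₀ ht
  have h2 : (1 - a*t) * (1 - a*t)⁻¹ = 1 := mul_inv_cancel₀ hat
  linear_combination -e - c*q^k*(1 - a*t)*h1 - B*t*h2

lemma det_upd_poly (m : ℕ) (x : Fin (m+1) → ℂ) (Q : ℂ[X])
    (hdeg : Q.natDegree < m + 1) (hc : Q.coeff m = 0) :
    ((vandermonde x).updateCol (Fin.last m) (fun i => Q.eval (x i))).det = 0 := by
  set UQ : Matrix (Fin (m+1)) (Fin (m+1)) ℂ :=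
    Matrix.of fun d j => if j = Fin.last m then Q.coeff d else if d = j then 1 else 0 with hUQ
  have hfact : (vandermonde x).updateCol (Fin.last m) (fun i => Q.eval (x i))
      = vandermonde x * UQ := by
    ext i j
    rw [Matrix.mul_apply, Matrix.updateCol_apply]
    by_cases hj : j = Fin.last m
    · subst hj
      simp only [hUQ, Matrix.of_apply, if_pos rfl, vandermonde_apply, if_pos]
      rw [eval_eq_sum_range' hdeg, ← Fin.sum_univ_eq_sum_range (fun d => Q.coeff d * x i ^ d)]
      exact Finset.sum_congr rfl fun d _ => mul_comm _ _
    · simp only [hUQ, Matrix.of_apply, if_neg hj, vandermonde_apply, mul_ite, mul_one, mul_zero]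
      simp [Finset.sum_ite_eq' Finset.univ j (fun d => x i ^ (d : ℕ))]
  rw [hfact, Matrix.det_mul]
  have hUT : UQ.BlockTriangular id := by
    intro d j hdj
    have hjl : j ≠ Fin.last m := by
      intro h; subst h
      exact absurd hdj (by simpa using (Fin.le_last d).not_gt)
    have : d ≠ j := ne_of_gt hdj
    simp [hUQ, hjl, this]
  rw [Matrix.det_of_upperTriangular hUT]
  have : ∏ d : Fin (m+1), UQ d d = Q.coeff m := by
    have h1 : ∀ d : Fin (m+1), UQ d d = if d = Fin.last m then Q.coeff d else 1 := by
      intro d; by_cases hd : d = Fin.last m <;> simp [hUQ, hd]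
    rw [Finset.prod_congr rfl fun d _ => h1 d, Finset.prod_ite_eq' Finset.univ (Fin.last m) (fun d => Q.coeff d)]
    simp
  rw [this, hc, mul_zero]

lemma det_upd_inv (m : ℕ) (x : Fin (m+1) → ℂ) (hx0 : ∀ i, x i ≠ 0) :
    (∏ l, x l) * ((vandermonde x).updateCol (Fin.last m) (fun i => (x i)⁻¹)).det
      = (-1) ^ m * (vandermonde x).det := by
  have key : (Matrix.of fun i j =>
      x i * ((vandermonde x).updateCol (Fin.last m) (fun i => (x i)⁻¹)) i j)
      = (vandermonde x).submatrix id (finRotate (m+1)) := by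
    ext i j
    rw [Matrix.of_apply, Matrix.updateCol_apply, Matrix.submatrix_apply]
    by_cases hj : j = Fin.last m
    · subst hj
      rw [if_pos rfl, mul_inv_cancel₀ (hx0 i)]
      simp [vandermonde_apply, Fin.last_add_one]
    · rw [if_neg hj, id_eq, vandermonde_apply, vandermonde_apply, finRotate_succ_apply,
        Fin.val_add_one_of_lt (Fin.lt_last_iff_ne_last.mpr hj), pow_succ]
      ring
  have h2 := Matrix.det_mul_column x ((vandermonde x).updateCol (Fin.last m) (fun i => (x i)⁻¹))
  rw [key] at h2
  rw [Matrix.det_permute', sign_finRotate] at h2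
  rw [← h2]
  push_cast
  ring

noncomputable def U2m (m : ℕ) : Matrix (Fin (m+1)) (Fin (m+1)) ℂ :=
  Matrix.of fun d j => if d = finRotate (m+1) j then 1 else 0

noncomputable def U3m (m : ℕ) (a : ℂ) : Matrix (Fin (m+1)) (Fin (m+1)) ℂ :=
  Matrix.of fun d j => if j = Fin.last m then (if d = 0 then 1 else 0)
    else ((if d = j then 1 else 0) - a * (if d = j + 1 then 1 else 0))

noncomputable def Lm (m : ℕ) (a : ℂ) : Matrix (Fin (m+1)) (Fin (m+1)) ℂ :=
  Matrix.of fun d c => if c = 0 then (if d = 0 then 1 else 0)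
    else ((if (d:ℕ) + 1 = (c:ℕ) then 1 else 0) - a * (if d = c then 1 else 0))

lemma U2m_det (m : ℕ) : (U2m m).det = (-1) ^ m := by
  have : U2m m = (1 : Matrix (Fin (m+1)) (Fin (m+1)) ℂ).submatrix id (finRotate (m+1)) := by
    ext d j; simp [U2m, Matrix.one_apply]
  rw [this, Matrix.det_permute', sign_finRotate, Matrix.det_one]
  push_cast; ring

lemma Lm_det (m : ℕ) (a : ℂ) : (Lm m a).det = (-a) ^ m := by
  have hUT : (Lm m a).BlockTriangular id := by
    intro d c hdc
    by_cases hc0 : c = 0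
    · subst hc0
      have : d ≠ 0 := by
        intro h; subst h; exact absurd hdc (lt_irrefl _)
      simp [Lm, this]
    · have h1 : ¬ ((d:ℕ) + 1 = (c:ℕ)) := by
        have : (c:ℕ) < (d:ℕ) := hdc
        omega
      have h2 : d ≠ c := ne_of_gt hdc
      simp [Lm, hc0, h1, h2]
  rw [Matrix.det_of_upperTriangular hUT]
  have h1 : ∀ d : Fin (m+1), Lm m a d d = if d = 0 then 1 else -a := by
    intro d; by_cases hd : d = 0
    · simp [Lm, hd]
    · simp [Lm, hd]
  rw [Finset.prod_congr rfl fun d _ => h1 d, Fin.prod_univ_succ]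
  simp [Fin.succ_ne_zero]

lemma U3m_eq (m : ℕ) (a : ℂ) : U3m m a = Lm m a * U2m m := by
  ext d j
  rw [Matrix.mul_apply]
  have step : ∀ c : Fin (m+1), Lm m a d c * U2m m c j
      = if c = finRotate (m+1) j then Lm m a d c else 0 := by
    intro c; by_cases h : c = finRotate (m+1) j <;> simp [U2m, h]
  rw [Finset.sum_congr rfl fun c _ => step c,
    Finset.sum_ite_eq' Finset.univ (finRotate (m+1) j) (fun c => Lm m a d c),
    if_pos (Finset.mem_univ _)]
  by_cases hj : j = Fin.last m
  · subst hj
    rw [finRotate_succ_apply, Fin.last_add_one]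
    simp [Lm, U3m]
  · have hval : ((j+1 : Fin (m+1)) : ℕ) = (j:ℕ) + 1 :=
      Fin.val_add_one_of_lt (Fin.lt_last_iff_ne_last.mpr hj)
    have hj1 : j + 1 ≠ 0 := by
      intro h; rw [h] at hval; simp at hval
    rw [finRotate_succ_apply]
    symm
    show Lm m a d (j+1) = U3m m a d j
    symm
    rw [Lm, U3m, Matrix.of_apply, Matrix.of_apply, if_neg hj1, if_neg hj]
    have hiff : ((d:ℕ) + 1 = ((j+1 : Fin (m+1)):ℕ)) ↔ d = j := by
      rw [hval, Fin.ext_iff]; omega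
    congr 1
    by_cases hdj : d = j
    · rw [if_pos hdj, if_pos (hiff.mpr hdj)]
    · rw [if_neg hdj, if_neg (fun h => hdj (hiff.mp h))]

lemma det_upd_inv_ax (m : ℕ) (a : ℂ) (x : Fin (m+1) → ℂ) (hax : ∀ i, 1 - a * x i ≠ 0) :
    (∏ l, (1 - a * x l)) * ((vandermonde x).updateCol (Fin.last m) (fun i => (1 - a * x i)⁻¹)).det
      = a ^ m * (vandermonde x).det := by
  have key : (Matrix.of fun i j =>
      (1 - a * x i) * ((vandermonde x).updateCol (Fin.last m) (fun i => (1 - a * x i)⁻¹)) i j)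
      = vandermonde x * U3m m a := by
    ext i j
    rw [Matrix.of_apply, Matrix.updateCol_apply, Matrix.mul_apply]
    by_cases hj : j = Fin.last m
    · subst hj
      rw [if_pos rfl, mul_inv_cancel₀ (hax i)]
      have step : ∀ d : Fin (m+1), vandermonde x i d * U3m m a d (Fin.last m)
          = if d = 0 then x i ^ (d:ℕ) else 0 := by
        intro d
        rw [vandermonde_apply, U3m, Matrix.of_apply, if_pos rfl]
        split_ifs <;> ring
      rw [Finset.sum_congr rfl fun d _ => step d,
        Finset.sum_ite_eq' Finset.univ (0 : Fin (m+1)) (fun d => x i ^ (d:ℕ))]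
      simp
    · have hval : ((j+1 : Fin (m+1)) : ℕ) = (j:ℕ) + 1 :=
        Fin.val_add_one_of_lt (Fin.lt_last_iff_ne_last.mpr hj)
      rw [if_neg hj]
      have step : ∀ d : Fin (m+1), vandermonde x i d * U3m m a d j
          = (if d = j then x i ^ (d:ℕ) else 0) - a * (if d = j + 1 then x i ^ (d:ℕ) else 0) := by
        intro d
        rw [vandermonde_apply, U3m, Matrix.of_apply, if_neg hj]
        split_ifs <;> ring
      rw [Finset.sum_congr rfl fun d _ => step d, Finset.sum_sub_distrib,
        Finset.sum_ite_eq' Finset.univ j (fun d => x i ^ (d:ℕ)),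
        ← Finset.mul_sum, Finset.sum_ite_eq' Finset.univ (j+1) (fun d => x i ^ (d:ℕ))]
      simp only [if_pos (Finset.mem_univ _), hval, vandermonde_apply, pow_succ]
      ring
  have h2 := Matrix.det_mul_column (fun i => 1 - a * x i)
    ((vandermonde x).updateCol (Fin.last m) (fun i => (1 - a * x i)⁻¹))
  rw [key, Matrix.det_mul, U3m_eq, Matrix.det_mul, Lm_det, U2m_det] at h2
  have h3 : (-a) ^ m * (-1 : ℂ) ^ m = a ^ m := by
    rw [← mul_pow, neg_mul_neg, mul_one]
  rw [← h2, h3, mul_comm]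

theorem vandermonde_type_determinant_V
    (n : ℕ) (hn : 1 ≤ n) (k : ℕ) (hk1 : 1 ≤ k) (hk2 : k ≤ n)
    (a b c q : ℂ)
    (x : Fin n → ℂ) (hx0 : ∀ i, x i ≠ 0) (hxd : Function.Injective x)
    (hax : ∀ i, 1 - a * x i ≠ 0) :
    (-1 : ℂ) ^ (n-1)
      * (Matrix.of fun i j : Fin n =>
          if j.val + 1 < n then x i ^ j.val
          else -((x i - c * q ^ k) * qPoch (a * x i) q (k-1)
                  * qPoch (a * b * q ^ k * x i) q (n-k))
                / (x i * (1 - a * x i))).det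
      / (∏ p ∈ Finset.univ.filter (fun p : Fin n × Fin n => p.1 < p.2), (x p.2 - x p.1))
      = c * q ^ k / (∏ l, x l)
        + (if k = 1 then 1 else 0)
          * ((-1 : ℂ) ^ n * a ^ (n-1) * (1 - a * c * q) * qPoch (b*q) q (n-1))
          / (∏ l, (1 - a * x l)) := by
  obtain ⟨m, rfl⟩ : ∃ m, n = m + 1 := ⟨n - 1, by omega⟩
  simp only [Nat.add_sub_cancel]
  obtain ⟨Q, hcm, hdm, heval⟩ := key_partial_fraction m k hk1 hk2 a b c q
  set colF : Fin (m+1) → ℂ := fun i =>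
    -((x i - c * q ^ k) * qPoch (a * x i) q (k-1) * qPoch (a * b * q ^ k * x i) q (m+1-k))
      / (x i * (1 - a * x i)) with hcolF
  have hV : (Matrix.of fun i j : Fin (m+1) =>
      if j.val + 1 < m + 1 then x i ^ j.val
      else -((x i - c * q ^ k) * qPoch (a * x i) q (k-1)
              * qPoch (a * b * q ^ k * x i) q (m+1-k))
            / (x i * (1 - a * x i)))
      = (vandermonde x).updateCol (Fin.last m) colF := by
    ext i j
    rw [Matrix.of_apply, Matrix.updateCol_apply]
    by_cases hj : j = Fin.last m
    · subst hj
      rw [if_pos rfl, if_neg (by simp)]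
    · rw [if_neg hj, if_pos (by have := Fin.val_lt_last hj; omega), vandermonde_apply]
  rw [hV]
  have hcol : colF = (fun i => Q.eval (x i))
      + ((c*q^k) • fun i => (x i)⁻¹) + ((Bc m k a b c q) • fun i => (1 - a * x i)⁻¹) := by
    funext i
    exact heval (x i) (hx0 i) (hax i)
  rw [hcol, Matrix.det_updateCol_add, Matrix.det_updateCol_add,
    Matrix.det_updateCol_smul, Matrix.det_updateCol_smul,
    det_upd_poly m x Q hdm hcm]
  have h2 := det_upd_inv m x hx0
  have h3 := det_upd_inv_ax m a x hax
  rw [aux_prod_pairs, ← det_vandermonde]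
  have hPx : (∏ l, x l) ≠ 0 := Finset.prod_ne_zero_iff.mpr fun i _ => hx0 i
  have hPax : (∏ l, (1 - a * x l)) ≠ 0 := Finset.prod_ne_zero_iff.mpr fun i _ => hax i
  have hDne : (vandermonde x).det ≠ 0 := by
    rw [det_vandermonde]
    refine Finset.prod_ne_zero_iff.mpr fun i _ => Finset.prod_ne_zero_iff.mpr fun j hj => ?_
    refine sub_ne_zero.mpr fun h => ?_
    exact absurd (hxd h) (ne_of_gt (Finset.mem_Ioi.mp hj))
  have e2 : ((vandermonde x).updateCol (Fin.last m) fun i => (x i)⁻¹).det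
      = (-1)^m * (vandermonde x).det / (∏ l, x l) := by
    rw [eq_div_iff hPx]; linear_combination h2
  have e3 : ((vandermonde x).updateCol (Fin.last m) fun i => (1 - a * x i)⁻¹).det
      = a^m * (vandermonde x).det / (∏ l, (1 - a * x l)) := by
    rw [eq_div_iff hPax]; linear_combination h3
  rw [e2, e3, Bc]
  have hsq : ((-1:ℂ))^(m*2) = 1 := by
    rw [mul_comm, pow_mul]; norm_num
  by_cases hk : k = 1
  · simp only [if_pos hk]
    field_simp
    ring_nf
    rw [hsq]
    ring
  · simp only [if_neg hk]
    field_simp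
    ring_nf
    rw [hsq]
    ring
end

section
/- Let n be a positive integer and U_n(q) the n×n upper triangular matrix with (i,j) entry (-1)^{i+j} q^{(j-i)(j-i+1)/2} [j-1 choose j-i]_q. Then the inverse of U_n(q) is the matrix with (i,j) entry q^{j-i} [j-1 choose i-1]_q. -/
open Finset

/-- Gaussian binomial coefficient, via the q-Pascal recurrence. -/
noncomputable def qbinom (q : ℂ) : ℕ → ℕ → ℂ
  | _, 0 => 1
  | 0, _+1 => 0
  | m+1, r+1 => qbinom q m r + q ^ (r+1) * qbinom q m (r+1)

/-- Gaussian binomial coefficient with integer arguments, zero when `r < 0` or `r > m`. -/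
noncomputable def qbinomZ (q : ℂ) (m r : ℤ) : ℂ :=
  if 0 ≤ r ∧ r ≤ m then qbinom q m.toNat r.toNat else 0

lemma qbinom_zero (q : ℂ) (m : ℕ) : qbinom q m 0 = 1 := by cases m <;> rfl

lemma qbinom_succ (q : ℂ) (m r : ℕ) :
    qbinom q (m+1) (r+1) = qbinom q m r + q ^ (r+1) * qbinom q m (r+1) := rfl

lemma qbinom_gt (q : ℂ) : ∀ m r : ℕ, m < r → qbinom q m r = 0 := by
  intro m
  induction m with
  | zero =>
    intro r hr
    cases r with
    | zero => omega
    | succ s => rfl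
  | succ a ih =>
    intro r hr
    cases r with
    | zero => omega
    | succ s =>
      rw [qbinom_succ, ih s (by omega), ih (s+1) (by omega)]
      ring

lemma qbinom_self (q : ℂ) : ∀ m : ℕ, qbinom q m m = 1 := by
  intro m
  induction m with
  | zero => rfl
  | succ a ih => rw [qbinom_succ, ih, qbinom_gt q a (a+1) (by omega)]; ring

lemma qbZ_neg (q : ℂ) (m r : ℤ) (h : r < 0) : qbinomZ q m r = 0 := if_neg (by omega)
lemma qbZ_gt (q : ℂ) (m r : ℤ) (h : m < r) : qbinomZ q m r = 0 := if_neg (by omega)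

lemma qbZ_ofNat (q : ℂ) (a b : ℕ) : qbinomZ q (a:ℤ) (b:ℤ) = qbinom q a b := by
  rw [qbinomZ]
  split
  · simp
  · next h =>
    have : a < b := by omega
    exact (qbinom_gt q a b this).symm

lemma qbZ_zero (q : ℂ) (m : ℤ) (h : 0 ≤ m) : qbinomZ q m 0 = 1 := by
  lift m to ℕ using h
  rw [show (0:ℤ) = ((0:ℕ):ℤ) by simp, qbZ_ofNat, qbinom_zero]

lemma qbZ_self (q : ℂ) (m : ℤ) (h : 0 ≤ m) : qbinomZ q m m = 1 := by
  lift m to ℕ using h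
  rw [qbZ_ofNat, qbinom_self]

lemma pascal1Z (q : ℂ) (m r : ℤ) (hm : 0 ≤ m) :
    qbinomZ q (m+1) (r+1) = qbinomZ q m r + q^(r+1) * qbinomZ q m (r+1) := by
  rcases lt_trichotomy r (-1) with h | h | h
  · rw [qbZ_neg _ _ _ (by omega), qbZ_neg _ _ _ (by omega), qbZ_neg _ _ _ (by omega)]; ring
  · subst h
    norm_num
    rw [qbZ_neg q m (-1) (by omega), qbZ_zero _ _ (by omega), qbZ_zero _ _ (by omega)]
    ring
  · have hr : 0 ≤ r := by omega
    lift r to ℕ using hr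
    lift m to ℕ using hm
    rw [show ((m:ℤ)+1) = ((m+1:ℕ):ℤ) by push_cast; ring,
      show ((r:ℤ)+1) = ((r+1:ℕ):ℤ) by push_cast; ring,
      qbZ_ofNat, qbZ_ofNat, qbZ_ofNat, qbinom_succ, zpow_natCast]

lemma pascal2N (q : ℂ) (hq : q ≠ 0) : ∀ (a : ℕ) (r : ℤ),
    qbinomZ q ((a:ℤ)+1) (r+1) = q^((a:ℤ)-r) * qbinomZ q a r + qbinomZ q a (r+1) := by
  intro a
  induction a with
  | zero =>
    intro r
    simp only [Nat.cast_zero]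
    rcases lt_trichotomy r (-1) with h | h | h
    · rw [qbZ_neg _ _ _ (by omega), qbZ_neg q 0 r (by omega), qbZ_neg q 0 (r+1) (by omega)]; ring
    · subst h; norm_num
      rw [qbZ_neg q 0 (-1) (by omega), qbZ_zero _ _ (by omega), qbZ_zero _ _ (by omega)]
      ring
    · rcases eq_or_lt_of_le (by omega : (0:ℤ) ≤ r) with h0 | h0
      · rw [← h0]; norm_num
        rw [qbZ_self q 1 (by omega), qbZ_zero _ _ (by omega), qbZ_gt q 0 1 (by omega)]
        ring
      · rw [qbZ_gt q _ _ (by omega), qbZ_gt q 0 r (by omega), qbZ_gt q 0 (r+1) (by omega)]; ring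
  | succ b ih =>
    intro r
    have hb : (0:ℤ) ≤ (b:ℤ) := by positivity
    have hcast : ((b+1:ℕ):ℤ) = (b:ℤ)+1 := by push_cast; ring
    rw [hcast]
    rcases lt_trichotomy r (-1) with h | h | h
    · rw [qbZ_neg _ _ _ (by omega), qbZ_neg q ((b:ℤ)+1) r (by omega),
        qbZ_neg q ((b:ℤ)+1) (r+1) (by omega)]
      ring
    · subst h; norm_num
      rw [qbZ_neg q ((b:ℤ)+1) (-1) (by omega), qbZ_zero _ _ (by omega), qbZ_zero _ _ (by omega)]
      ring
    · have hr : (0:ℤ) ≤ r := by omega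
      have e1 := pascal1Z q ((b:ℤ)+1) r (by omega)
      have e2 : qbinomZ q ((b:ℤ)+1) r
          = q^((b:ℤ)-(r-1)) * qbinomZ q b (r-1) + qbinomZ q b r := by
        have := ih (r-1); rw [show r - 1 + 1 = r by ring] at this; exact this
      have e3 := ih r
      have e4 : qbinomZ q ((b:ℤ)+1) r = qbinomZ q b (r-1) + q^r * qbinomZ q b r := by
        have := pascal1Z q (b:ℤ) (r-1) hb; rw [show r - 1 + 1 = r by ring] at this; exact this
      have e5 := pascal1Z q (b:ℤ) r hb
      calc qbinomZ q ((b:ℤ)+1+1) (r+1)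
          = (q^((b:ℤ)-(r-1)) * qbinomZ q b (r-1) + qbinomZ q b r)
            + q^(r+1) * (q^((b:ℤ)-r) * qbinomZ q b r + qbinomZ q b (r+1)) := by
            rw [e1, e2, e3]
        _ = q^((b:ℤ)+1-r) * (qbinomZ q b (r-1) + q^r * qbinomZ q b r)
            + (qbinomZ q b r + q^(r+1) * qbinomZ q b (r+1)) := by
            simp only [zpow_sub₀ hq, zpow_add₀ hq, zpow_one]
            field_simp
            ring
        _ = q^((b:ℤ)+1-r) * qbinomZ q ((b:ℤ)+1) r + qbinomZ q ((b:ℤ)+1) (r+1) := by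
            rw [← e4, ← e5]

lemma pascal2Z (q : ℂ) (hq : q ≠ 0) (m : ℤ) (hm : 0 ≤ m) (r : ℤ) :
    qbinomZ q (m+1) (r+1) = q^(m-r) * qbinomZ q m r + qbinomZ q m (r+1) := by
  lift m to ℕ using hm
  exact pascal2N q hq m r

lemma symmN (q : ℂ) (hq : q ≠ 0) : ∀ (a : ℕ) (r : ℤ),
    qbinomZ q a r = qbinomZ q a ((a:ℤ) - r) := by
  intro a
  induction a with
  | zero =>
    intro r
    simp only [Nat.cast_zero, zero_sub]
    rcases lt_trichotomy r 0 with h | h | h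
    · rw [qbZ_neg q 0 r h, qbZ_gt q 0 (-r) (by omega)]
    · rw [h]; norm_num
    · rw [qbZ_gt q 0 r h, qbZ_neg q 0 (-r) (by omega)]
  | succ b ih =>
    intro r
    have hb : (0:ℤ) ≤ (b:ℤ) := by positivity
    have hcast : ((b+1:ℕ):ℤ) = (b:ℤ)+1 := by push_cast; ring
    rw [hcast]
    rcases lt_trichotomy r 0 with h | h | h
    · rw [qbZ_neg q _ r h, qbZ_gt q ((b:ℤ)+1) ((b:ℤ)+1-r) (by omega)]
    · rw [h, sub_zero, qbZ_zero q _ (by omega), qbZ_self q _ (by omega)]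
    · have e1 : qbinomZ q ((b:ℤ)+1) r = qbinomZ q b (r-1) + q^r * qbinomZ q b r := by
        have := pascal1Z q (b:ℤ) (r-1) hb; rw [show r - 1 + 1 = r by ring] at this; exact this
      have e2 : qbinomZ q ((b:ℤ)+1) ((b:ℤ)+1-r)
          = q^r * qbinomZ q b ((b:ℤ)-r) + qbinomZ q b ((b:ℤ)-r+1) := by
        have := pascal2Z q hq (b:ℤ) hb ((b:ℤ)-r)
        rw [show (b:ℤ) - ((b:ℤ)-r) = r by ring] at this
        rw [show (b:ℤ) + 1 - r = (b:ℤ) - r + 1 by ring]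
        exact this
      rw [e1, e2, ih (r-1), ih r, show (b:ℤ) - (r-1) = (b:ℤ) - r + 1 by ring]
      ring

lemma Teq (d : ℤ) : (d+1)*((d+1)+1)/2 = d*(d+1)/2 + (d+1) := by
  obtain ⟨c, hc⟩ := Int.even_mul_succ_self d
  have h1 : (d+1)*((d+1)+1) = d*(d+1) + 2*(d+1) := by ring
  have hc' : d*(d+1) = c + c := hc
  omega


lemma keyS (q : ℂ) (hq : q ≠ 0) (N : ℕ) : ∀ (jn : ℕ), jn < N → ∀ i : ℤ,
    (∑ k ∈ Finset.range N,
      (-1:ℂ)^((k:ℤ)-i) * q^((((k:ℤ)-i)*(((k:ℤ)-i)+1))/2) * q^((jn:ℤ)-(k:ℤ))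
        * qbinomZ q k i * qbinomZ q jn k)
      = if i = (jn:ℤ) then 1 else 0 := by
  intro jn
  induction jn with
  | zero =>
    intro hN i
    rw [Finset.sum_eq_single_of_mem 0 (Finset.mem_range.2 (by omega))]
    · simp only [Nat.cast_zero]
      rcases eq_or_ne i 0 with h | h
      · subst h
        simp [qbZ_zero q 0 le_rfl]
      · rw [if_neg (by omega)]
        rcases lt_or_gt_of_ne h with h' | h'
        · rw [qbZ_neg q 0 i h']; ring
        · rw [qbZ_gt q 0 i h']; ring
    · intro b _ hb
      have hb' : (0:ℤ) < (b:ℤ) := by exact_mod_cast Nat.pos_of_ne_zero hb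
      rw [show ((0:ℕ):ℤ) = (0:ℤ) by norm_num, qbZ_gt q 0 b hb']
      ring
  | succ m ih =>
    intro hN i
    obtain ⟨M, rfl⟩ : ∃ M, N = M+1 := ⟨N-1, by omega⟩
    have hm0 : (0:ℤ) ≤ (m:ℤ) := by positivity
    have hcast : ((m+1:ℕ):ℤ) = (m:ℤ)+1 := by push_cast; ring
    rcases lt_or_ge i 0 with hi | hi
    · rw [Finset.sum_eq_zero, if_neg (by omega)]
      intro k _
      rw [qbZ_neg q k i hi]
      ring
    · have key1 : ∀ k : ℕ, qbinomZ q ((m:ℤ)+1) k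
          = qbinomZ q m ((k:ℤ)-1) + q^(k:ℤ) * qbinomZ q m k := by
        intro k
        have := pascal1Z q (m:ℤ) ((k:ℤ)-1) hm0
        rw [show (k:ℤ) - 1 + 1 = (k:ℤ) by ring] at this
        exact this
      have keyB : ∀ k : ℕ, qbinomZ q ((k:ℤ)+1) i
          = qbinomZ q k (i-1) + q^i * qbinomZ q k i := by
        intro k
        have := pascal1Z q (k:ℤ) (i-1) (by positivity)
        rw [show i - 1 + 1 = i by ring] at this
        exact this
      rw [hcast]
      calc (∑ k ∈ Finset.range (M+1),
            (-1:ℂ)^((k:ℤ)-i) * q^((((k:ℤ)-i)*(((k:ℤ)-i)+1))/2) * q^(((m:ℤ)+1)-(k:ℤ))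
              * qbinomZ q k i * qbinomZ q ((m:ℤ)+1) k)
          = (∑ k ∈ Finset.range (M+1),
              (-1:ℂ)^((k:ℤ)-i) * q^((((k:ℤ)-i)*(((k:ℤ)-i)+1))/2) * q^(((m:ℤ)+1)-(k:ℤ))
                * qbinomZ q k i * qbinomZ q m ((k:ℤ)-1))
            + (∑ k ∈ Finset.range (M+1),
              (-1:ℂ)^((k:ℤ)-i) * q^((((k:ℤ)-i)*(((k:ℤ)-i)+1))/2) * q^(((m:ℤ)+1)-(k:ℤ))
                * qbinomZ q k i * (q^(k:ℤ) * qbinomZ q m k)) := by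
            rw [← Finset.sum_add_distrib]
            refine Finset.sum_congr rfl (fun k _ => ?_)
            rw [key1 k]
            ring
        _ = (∑ k ∈ Finset.range (M+1),
              (-1:ℂ)^(((k:ℤ)+1)-i) * q^(((((k:ℤ)+1)-i)*((((k:ℤ)+1)-i)+1))/2)
                * q^(((m:ℤ)+1)-((k:ℤ)+1)) * qbinomZ q ((k:ℤ)+1) i * qbinomZ q m k)
            + (∑ k ∈ Finset.range (M+1),
              (-1:ℂ)^((k:ℤ)-i) * q^((((k:ℤ)-i)*(((k:ℤ)-i)+1))/2) * q^(((m:ℤ)+1)-(k:ℤ))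
                * qbinomZ q k i * (q^(k:ℤ) * qbinomZ q m k)) := by
            congr 1
            rw [Finset.sum_range_succ'
              (fun k : ℕ => (-1:ℂ)^((k:ℤ)-i) * q^((((k:ℤ)-i)*(((k:ℤ)-i)+1))/2)
                * q^(((m:ℤ)+1)-(k:ℤ)) * qbinomZ q k i * qbinomZ q m ((k:ℤ)-1)) M,
              Finset.sum_range_succ
              (fun k : ℕ => (-1:ℂ)^(((k:ℤ)+1)-i) * q^(((((k:ℤ)+1)-i)*((((k:ℤ)+1)-i)+1))/2)
                * q^(((m:ℤ)+1)-((k:ℤ)+1)) * qbinomZ q ((k:ℤ)+1) i * qbinomZ q m k) M]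
            simp only [Nat.cast_zero, zero_sub, Nat.cast_add, Nat.cast_one]
            rw [qbZ_neg q m (-1) (by omega), qbZ_gt q m (M:ℤ) (by exact_mod_cast by omega)]
            simp only [mul_zero, zero_mul, add_zero]
            refine Finset.sum_congr rfl (fun x _ => ?_)
            rw [show (x:ℤ)+1-1 = (x:ℤ) by ring]
        _ = (∑ k ∈ Finset.range (M+1),
              (-1:ℂ)^((k:ℤ)-(i-1)) * q^((((k:ℤ)-(i-1))*(((k:ℤ)-(i-1))+1))/2)
                * q^((m:ℤ)-(k:ℤ)) * qbinomZ q k (i-1) * qbinomZ q m k) := by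
            rw [← Finset.sum_add_distrib]
            refine Finset.sum_congr rfl (fun k _ => ?_)
            rw [keyB k]
            have ed1 : ((k:ℤ)+1)-i = ((k:ℤ)-i)+1 := by ring
            have ed2 : (k:ℤ)-(i-1) = ((k:ℤ)-i)+1 := by ring
            rw [ed1, ed2, Teq ((k:ℤ)-i)]
            have hsign : (-1:ℂ)^(((k:ℤ)-i)+1) = -((-1:ℂ)^((k:ℤ)-i)) := by
              rw [zpow_add_one₀ (by norm_num : (-1:ℂ) ≠ 0)]
              ring
            rw [hsign]
            set X := qbinomZ q k (i-1)
            set Y := qbinomZ q k i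
            set Z := qbinomZ q m k
            simp only [zpow_add₀ hq, zpow_sub₀ hq, zpow_one]
            field_simp
            have h1 : q ^ i * (q ^ k * q) ≠ 0 :=
              mul_ne_zero (zpow_ne_zero _ hq) (mul_ne_zero (pow_ne_zero _ hq) hq)
            have h2 : q ^ i * q ^ k ≠ 0 := mul_ne_zero (zpow_ne_zero _ hq) (pow_ne_zero _ hq)
            ring
        _ = if i - 1 = (m:ℤ) then 1 else 0 := ih (by omega) (i-1)
        _ = if i = (m:ℤ)+1 then 1 else 0 := by
            rcases eq_or_ne i ((m:ℤ)+1) with h | h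
            · rw [if_pos (by omega), if_pos h]
            · rw [if_neg (by omega), if_neg h]

lemma signconv (a b : ℕ) : ((-1:ℂ))^((b:ℤ)-(a:ℤ)) = (-1:ℂ)^(a+b) := by
  have hsq : ((-1:ℂ)^a) * ((-1:ℂ)^a) = 1 := by
    rw [← pow_add]
    rw [show a + a = 2 * a by ring, pow_mul]
    norm_num
  have hinv : ((-1:ℂ)^a)⁻¹ = (-1:ℂ)^a :=
    inv_eq_of_mul_eq_one_right hsq
  rw [zpow_sub₀ (by norm_num : (-1:ℂ) ≠ 0), zpow_natCast, zpow_natCast, pow_add]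
  rw [div_eq_mul_inv, hinv]
  ring


theorem inverse_of_U
    (n : ℕ) (hn : 1 ≤ n) (q : ℂ) (hq : q ≠ 0) :
    (Matrix.of fun i j : Fin n =>
        (-1 : ℂ) ^ (i.val + j.val)
          * q ^ ((((j.val : ℤ) - i.val) * ((j.val : ℤ) - i.val + 1)) / 2)
          * qbinomZ q (j.val : ℤ) ((j.val : ℤ) - i.val))
      * (Matrix.of fun i j : Fin n =>
        q ^ ((j.val : ℤ) - i.val) * qbinomZ q (j.val : ℤ) (i.val : ℤ)) = 1
    ∧ (Matrix.of fun i j : Fin n =>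
        q ^ ((j.val : ℤ) - i.val) * qbinomZ q (j.val : ℤ) (i.val : ℤ))
      * (Matrix.of fun i j : Fin n =>
        (-1 : ℂ) ^ (i.val + j.val)
          * q ^ ((((j.val : ℤ) - i.val) * ((j.val : ℤ) - i.val + 1)) / 2)
          * qbinomZ q (j.val : ℤ) ((j.val : ℤ) - i.val)) = 1 := by
  have main : (Matrix.of fun i j : Fin n =>
        (-1 : ℂ) ^ (i.val + j.val)
          * q ^ ((((j.val : ℤ) - i.val) * ((j.val : ℤ) - i.val + 1)) / 2)
          * qbinomZ q (j.val : ℤ) ((j.val : ℤ) - i.val))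
      * (Matrix.of fun i j : Fin n =>
        q ^ ((j.val : ℤ) - i.val) * qbinomZ q (j.val : ℤ) (i.val : ℤ)) = 1 := by
    ext i j
    rw [Matrix.mul_apply, Matrix.one_apply]
    simp only [Matrix.of_apply]
    calc (∑ k : Fin n,
          ((-1:ℂ)^(i.val + k.val) * q^((((k.val:ℤ)-i.val)*(((k.val:ℤ)-i.val)+1))/2)
            * qbinomZ q (k.val:ℤ) ((k.val:ℤ)-(i.val:ℤ)))
          * (q^((j.val:ℤ)-(k.val:ℤ)) * qbinomZ q (j.val:ℤ) (k.val:ℤ)))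
        = ∑ k : Fin n,
          (-1:ℂ)^((k.val:ℤ)-(i.val:ℤ))
            * q^((((k.val:ℤ)-(i.val:ℤ))*(((k.val:ℤ)-(i.val:ℤ))+1))/2)
            * q^((j.val:ℤ)-(k.val:ℤ)) * qbinomZ q (k.val:ℤ) (i.val:ℤ)
            * qbinomZ q (j.val:ℤ) (k.val:ℤ) := by
          refine Finset.sum_congr rfl (fun k _ => ?_)
          rw [← signconv i.val k.val]
          have hsym : qbinomZ q (k.val:ℤ) ((k.val:ℤ)-(i.val:ℤ))
              = qbinomZ q (k.val:ℤ) (i.val:ℤ) := by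
            rw [symmN q hq k.val ((k.val:ℤ)-(i.val:ℤ)),
              show (k.val:ℤ)-((k.val:ℤ)-(i.val:ℤ)) = (i.val:ℤ) by ring]
          rw [hsym]
          ring
      _ = ∑ k ∈ Finset.range n,
          (-1:ℂ)^((k:ℤ)-(i.val:ℤ))
            * q^((((k:ℤ)-(i.val:ℤ))*(((k:ℤ)-(i.val:ℤ))+1))/2)
            * q^((j.val:ℤ)-(k:ℤ)) * qbinomZ q (k:ℤ) (i.val:ℤ)
            * qbinomZ q (j.val:ℤ) (k:ℤ) :=
          Fin.sum_univ_eq_sum_range (fun k : ℕ =>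
            (-1:ℂ)^((k:ℤ)-(i.val:ℤ))
              * q^((((k:ℤ)-(i.val:ℤ))*(((k:ℤ)-(i.val:ℤ))+1))/2)
              * q^((j.val:ℤ)-(k:ℤ)) * qbinomZ q (k:ℤ) (i.val:ℤ)
              * qbinomZ q (j.val:ℤ) (k:ℤ)) n
      _ = if (i.val:ℤ) = (j.val:ℤ) then 1 else 0 := keyS q hq n j.val j.isLt i.val
      _ = if i = j then 1 else 0 := by
          rcases eq_or_ne i j with h | h
          · rw [if_pos (by exact_mod_cast congrArg (fun x : Fin n => (x.val:ℤ)) h), if_pos h]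
          · rw [if_neg (by simpa [Fin.ext_iff] using h), if_neg h]
  exact ⟨main, mul_eq_one_comm.mp main⟩
end
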